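/- In the algebra S of finite and cofinite subsets of ω with the operators K_n defined via the cutoff k(x), each K_n is a normal modal operator: K_n 1 = 1 and K_n(x ⊓ y) = K_n x ⊓ K_n y for all x, y ∈ S. -/
import Mathlib


open scoped Classical

/-- Finite and cofinite subsets of ω. -/
def FC : Set (Set ℕ) := {x | x.Finite ∨ xᶜ.Finite}

/-- For cofinite `x ≠ univ`, the least even `i` such that every even `j ≥ i` lies in `x`. -/
noncomputable def kk (x : Set ℕ) : ℕ :=
  sInf {i | Even i ∧ ∀ j, Even j → i ≤ j → j ∈ x}

/-- The knowledge operators of the counterexample algebra. -/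
noncomputable def Kop (N n : ℕ) (x : Set ℕ) : Set ℕ :=
  if x = Set.univ then Set.univ
  else if x.Finite then ∅
  else {i | (Odd i ∨ (if n % N = kk x % N then kk x < i else kk x ≤ i)) ∧ i ∈ x}

/-- The common knowledge operator of the counterexample algebra. -/
noncomputable def Cop (x : Set ℕ) : Set ℕ :=
  if x = Set.univ then Set.univ else ∅

/-- The "everyone knows" operator. -/
noncomputable def Eop (N : ℕ) (x : Set ℕ) : Set ℕ :=
  ⋂ n ∈ Finset.range N, Kop N n x

def Skk (x : Set ℕ) : Set ℕ := {i | Even i ∧ ∀ j, Even j → i ≤ j → j ∈ x}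

lemma Skk_nonempty {x : Set ℕ} (hx : xᶜ.Finite) : (Skk x).Nonempty := by
  obtain ⟨b, hb⟩ := hx.bddAbove
  refine ⟨2 * (b + 1), ⟨⟨b + 1, by ring⟩, ?_⟩⟩
  intro j _ hj
  by_contra hjx
  have := hb hjx
  omega

lemma kk_mem {x : Set ℕ} (hx : xᶜ.Finite) : kk x ∈ Skk x :=
  Nat.sInf_mem (Skk_nonempty hx)

lemma kk_inter {x y : Set ℕ} (hx : xᶜ.Finite) (hy : yᶜ.Finite) :
    kk (x ∩ y) = max (kk x) (kk y) := by
  have hxm := kk_mem hx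
  have hym := kk_mem hy
  apply le_antisymm
  · apply Nat.sInf_le
    refine ⟨?_, ?_⟩
    · rcases max_cases (kk x) (kk y) with ⟨h, _⟩ | ⟨h, _⟩
      · rw [h]; exact hxm.1
      · rw [h]; exact hym.1
    · intro j hj hle
      exact ⟨hxm.2 j hj (le_trans (le_max_left _ _) hle),
             hym.2 j hj (le_trans (le_max_right _ _) hle)⟩
  · have hxy : (x ∩ y)ᶜ.Finite := by
      rw [Set.compl_inter]; exact hx.union hy
    have hm := kk_mem hxy
    apply max_le
    · exact Nat.sInf_le ⟨hm.1, fun j hj hle => (hm.2 j hj hle).1⟩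
    · exact Nat.sInf_le ⟨hm.1, fun j hj hle => (hm.2 j hj hle).2⟩

lemma cof_ne_univ_infinite {x : Set ℕ} (hx : xᶜ.Finite) : ¬ x.Finite := by
  intro hfin
  have : (Set.univ : Set ℕ).Finite := by
    have := hfin.union hx
    simpa [Set.union_compl_self] using this
  exact Set.infinite_univ this


lemma cond_iff (N n a b i : ℕ) :
    (if n % N = max a b % N then max a b < i else max a b ≤ i) ↔
      ((if n % N = a % N then a < i else a ≤ i) ∧
       (if n % N = b % N then b < i else b ≤ i)) := by
  by_cases hab : a = b
  · subst hab; simp only [max_self]; split_ifs <;> tauto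
  · rcases le_total a b with h | h
    · rw [max_eq_right h]; split_ifs <;> omega
    · rw [max_eq_left h]; split_ifs <;> omega

/-- Each `Kop N n` is a normal modal operator on the algebra of finite and cofinite sets. -/
theorem stmt8 (N : ℕ) (hN : 1 ≤ N) (n : ℕ) (hn : n < N) :
    Kop N n Set.univ = Set.univ ∧
    ∀ x ∈ FC, ∀ y ∈ FC, Kop N n (x ∩ y) = Kop N n x ∩ Kop N n y := by
  constructor
  · simp [Kop]
  intro x hx y hy
  by_cases hxu : x = Set.univ
  · subst hxu; simp [Kop]
  by_cases hyu : y = Set.univ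
  · subst hyu; simp [Kop]
  by_cases hxf : x.Finite
  · have hxyf : (x ∩ y).Finite := hxf.inter_of_left y
    have hxyu : x ∩ y ≠ Set.univ := by
      intro h
      exact hxu (Set.eq_univ_of_univ_subset (h ▸ Set.inter_subset_left))
    simp [Kop, hxu, hxf, hxyu, hxyf]
  by_cases hyf : y.Finite
  · have hxyf : (x ∩ y).Finite := hyf.inter_of_right x
    have hxyu : x ∩ y ≠ Set.univ := by
      intro h
      exact hyu (Set.eq_univ_of_univ_subset (h ▸ Set.inter_subset_right))
    simp [Kop, hyu, hyf, hxyu, hxyf]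
  -- both cofinite, ≠ univ
  have hxc : xᶜ.Finite := hx.resolve_left hxf
  have hyc : yᶜ.Finite := hy.resolve_left hyf
  have hxyc : (x ∩ y)ᶜ.Finite := by rw [Set.compl_inter]; exact hxc.union hyc
  have hxyu : x ∩ y ≠ Set.univ := by
    intro h
    exact hxu (Set.eq_univ_of_univ_subset (h ▸ Set.inter_subset_left))
  have hxyf : ¬ (x ∩ y).Finite := cof_ne_univ_infinite hxyc
  have hkeq : kk (x ∩ y) = max (kk x) (kk y) := kk_inter hxc hyc
  have hkx : Even (kk x) := (kk_mem hxc).1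
  have hky : Even (kk y) := (kk_mem hyc).1
  simp only [Kop, if_neg hxu, if_neg hyu, if_neg hxyu, if_neg hxf, if_neg hyf, if_neg hxyf]
  ext i
  simp only [Set.mem_setOf_eq, Set.mem_inter_iff, hkeq]
  have hc := cond_iff N n (kk x) (kk y) i
  tauto
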